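/- A DAG D = (V,A) is a funnel if and only if it admits a funnel labeling, i.e., a map L:V→{Fork, Merge} such that every vertex labeled Fork has indegree at most 1 in D, every vertex labeled Merge has outdegree at most 1 in D, and there is no arc (v,u) ∈ A with L(v)=Merge and L(u)=Fork. -/

import Mathlib

variable {V : Type*} [Fintype V] [DecidableEq V]

/-- Arc adjacency of a digraph given by its finite arc set. -/
def ArcAdj (A : Finset (V × V)) : V → V → Prop := fun u v => (u, v) ∈ A

/-- A digraph is a DAG if it contains no directed cycle. -/
def IsDAG (A : Finset (V × V)) : Prop := ∀ v : V, ¬ Relation.TransGen (ArcAdj A) v v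

/-- Indegree of a vertex. -/
def inDeg (A : Finset (V × V)) (v : V) : ℕ := (A.filter fun e => e.2 = v).card

/-- Outdegree of a vertex. -/
def outDeg (A : Finset (V × V)) (v : V) : ℕ := (A.filter fun e => e.1 = v).card

/-- A source is a vertex of indegree 0. -/
def IsSource (A : Finset (V × V)) (v : V) : Prop := inDeg A v = 0

/-- A sink is a vertex of outdegree 0. -/
def IsSink (A : Finset (V × V)) (v : V) : Prop := outDeg A v = 0

/-- The arcs (consecutive pairs of vertices) of a path given as a list of vertices. -/
def arcsOf (p : List V) : List (V × V) := p.zip p.tail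

/-- A source-sink path: a directed path (with at least one arc) starting at a
source and ending at a sink. -/
def IsSourceSinkPath (A : Finset (V × V)) (p : List V) : Prop :=
  2 ≤ p.length ∧ List.Chain' (ArcAdj A) p ∧ p.Nodup ∧
  (∃ s, p.head? = some s ∧ IsSource A s) ∧
  (∃ t, p.getLast? = some t ∧ IsSink A t)

/-- An arc is private if exactly one source-sink path contains it. -/
def IsPrivate (A : Finset (V × V)) (e : V × V) : Prop :=
  ∃! p : List V, IsSourceSinkPath A p ∧ e ∈ arcsOf p

/-- A funnel: every source-sink path contains at least one private arc. -/
def IsFunnel (A : Finset (V × V)) : Prop :=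
  ∀ p : List V, IsSourceSinkPath A p → ∃ e ∈ arcsOf p, IsPrivate A e

/-- The arc-deletion distance to a funnel: the minimum number of arcs whose
deletion turns the digraph into a funnel. -/
noncomputable def funnelDist (A : Finset (V × V)) : ℕ :=
  sInf {k | ∃ B ⊆ A, B.card = k ∧ IsFunnel (A \ B)}

/-- Vertex labels for funnel labelings. -/
inductive Label : Type where
  | fork
  | merge
deriving DecidableEq

/-- A funnel labeling: Fork vertices have indegree at most 1, Merge vertices have
outdegree at most 1, and no arc goes from a Merge vertex to a Fork vertex. -/
def FunnelLabeling (A : Finset (V × V)) (L : V → Label) : Prop :=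
  (∀ v, L v = Label.fork → inDeg A v ≤ 1) ∧
  (∀ v, L v = Label.merge → outDeg A v ≤ 1) ∧
  ∀ v u, (v, u) ∈ A → ¬(L v = Label.merge ∧ L u = Label.fork)

/-!
Under a funnel labeling, walking backwards from a Fork vertex only meets Fork vertices of indegree
at most one, and walking forwards from a Merge vertex only meets Merge vertices of outdegree at most
one. A source-sink path starts at a source and ends at a sink, so it has an arc from a Fork vertex
(or the source) to a Merge vertex (or the sink), and the path is the only one through that arc.

Conversely, in a funnel no vertex `f` of outdegree at least two is reachable from a vertex `m` of
indegree at least two: otherwise take a walk `w` from `m` to `f`, extend it backwards through two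
in-neighbours of `m` to sources (`P₁`, `P₂`) and forwards through two out-neighbours of `f` to
sinks (`S₁`, `S₂`). A private arc of `P₁ ++ w ++ S₁` lies on `P₁ ++ w`, hence on
`P₁ ++ w ++ S₂`, or on `w ++ S₁`, hence on `P₂ ++ w ++ S₁`. So labeling Merge exactly the vertices
reachable from a vertex of indegree at least two is a funnel labeling.
-/

open Relation List

namespace List

variable {α : Type*}

theorem eq_of_isChain_cons_of_unique_succ {r : α → α → Prop} {M : α → Prop}
    (hdet : ∀ ⦃a b c⦄, M a → r a b → r a c → b = c) (hM : ∀ ⦃a b⦄, M a → r a b → M b) :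
    ∀ {a : α} {l₁ l₂ : List α}, M a → IsChain r (a :: l₁) → IsChain r (a :: l₂) →
      (∀ x ∈ (a :: l₁).getLast?, ∀ y, ¬ r x y) → (∀ x ∈ (a :: l₂).getLast?, ∀ y, ¬ r x y) →
      l₁ = l₂
  | _, [], [], _, _, _, _, _ => rfl
  | a, [], b :: _, _, _, h₂, ht₁, _ => (ht₁ a rfl b (isChain_cons_cons.1 h₂).1).elim
  | a, b :: _, [], _, h₁, _, _, ht₂ => (ht₂ a rfl b (isChain_cons_cons.1 h₁).1).elim
  | a, b :: l₁, c :: l₂, ha, h₁, h₂, ht₁, ht₂ => by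
    obtain ⟨hab, h₁⟩ := isChain_cons_cons.1 h₁
    obtain ⟨hac, h₂⟩ := isChain_cons_cons.1 h₂
    obtain rfl := hdet ha hab hac
    rw [getLast?_cons_cons] at ht₁ ht₂
    rw [eq_of_isChain_cons_of_unique_succ hdet hM (hM ha hab) h₁ h₂ ht₁ ht₂]

theorem eq_of_isChain_concat_of_unique_pred {r : α → α → Prop} {M : α → Prop}
    (hdet : ∀ ⦃a b c⦄, M a → r b a → r c a → b = c) (hM : ∀ ⦃a b⦄, M a → r b a → M b)
    {a : α} {l₁ l₂ : List α} (ha : M a) (h₁ : IsChain r (l₁ ++ [a]))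
    (h₂ : IsChain r (l₂ ++ [a])) (hs₁ : ∀ x ∈ (l₁ ++ [a]).head?, ∀ y, ¬ r y x)
    (hs₂ : ∀ x ∈ (l₂ ++ [a]).head?, ∀ y, ¬ r y x) : l₁ = l₂ := by
  rw [← reverse_reverse (l₁ ++ [a]), isChain_reverse, reverse_append] at h₁
  rw [← reverse_reverse (l₂ ++ [a]), isChain_reverse, reverse_append] at h₂
  rw [← getLast?_reverse, reverse_append] at hs₁ hs₂
  exact reverse_injective (eq_of_isChain_cons_of_unique_succ (r := fun a b => r b a)
    hdet hM ha h₁ h₂ hs₁ hs₂)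

end List

section Arcs

variable {α : Type*}

theorem arcsOf_cons_cons (a b : α) (l : List α) :
    arcsOf (a :: b :: l) = (a, b) :: arcsOf (b :: l) :=
  rfl

theorem arcsOf_append_cons (l₁ : List α) (a : α) (l₂ : List α) :
    arcsOf (l₁ ++ a :: l₂) = arcsOf (l₁ ++ [a]) ++ arcsOf (a :: l₂) := by
  induction l₁ with
  | nil => rfl
  | cons x l₁ ih =>
    cases l₁ with
    | nil => rfl
    | cons y l₁ =>
      simp only [cons_append] at ih ⊢
      rw [arcsOf_cons_cons, arcsOf_cons_cons, ih, cons_append]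

theorem mem_arcsOf_iff {a b : α} {p : List α} :
    (a, b) ∈ arcsOf p ↔ ∃ l₁ l₂, p = l₁ ++ a :: b :: l₂ := by
  refine ⟨fun h => ?_, fun ⟨l₁, l₂, hp⟩ => ?_⟩
  · induction p with
    | nil => simp [arcsOf] at h
    | cons x l ih =>
      cases l with
      | nil => simp [arcsOf] at h
      | cons y l =>
        rcases mem_cons.1 h with h | h
        · obtain ⟨rfl, rfl⟩ := Prod.mk.inj h
          exact ⟨[], l, rfl⟩
        · obtain ⟨l₁, l₂, hl⟩ := ih h
          exact ⟨x :: l₁, l₂, by rw [hl, cons_append]⟩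
  · rw [hp, arcsOf_append_cons, arcsOf_cons_cons]
    exact mem_append_right _ (mem_cons_self ..)

theorem List.IsInfix.arcsOf_subset {l₁ l₂ : List α} (h : l₁ <:+: l₂) :
    arcsOf l₁ ⊆ arcsOf l₂ := by
  obtain ⟨s, t, rfl⟩ := h
  rintro ⟨a, b⟩ hab
  obtain ⟨k₁, k₂, rfl⟩ := mem_arcsOf_iff.1 hab
  exact mem_arcsOf_iff.2 ⟨s ++ k₁, k₂ ++ t, by simp⟩

theorem mem_arcsOf_append_append {e : α × α} {u w v : List α} (hw : w ≠ [])
    (he : e ∈ arcsOf (u ++ w ++ v)) : e ∈ arcsOf (u ++ w) ∨ e ∈ arcsOf (w ++ v) := by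
  obtain ⟨w, f, rfl⟩ := (eq_nil_or_concat w).resolve_left hw
  rw [concat_eq_append, append_assoc, append_assoc, singleton_append, ← append_assoc,
    arcsOf_append_cons, mem_append] at he
  refine he.imp (by simpa using ·) fun he => ?_
  rw [concat_eq_append, append_assoc, singleton_append]
  exact (suffix_append w _).isInfix.arcsOf_subset he

theorem exists_mem_arcsOf_of_head_of_getLast {P Q : α → Prop} (hPQ : ∀ x, P x ∨ Q x) :
    ∀ {a : α} {l : List α}, l ≠ [] → P a → (∀ x ∈ (a :: l).getLast?, Q x) →
      ∃ e ∈ arcsOf (a :: l), P e.1 ∧ Q e.2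
  | _, [], hl, _, _ => (hl rfl).elim
  | a, b :: l, _, ha, hlast => by
    by_cases hb : Q b
    · exact ⟨(a, b), mem_cons_self .., ha, hb⟩
    · cases l with
      | nil => exact (hb (hlast b rfl)).elim
      | cons c l =>
        rw [getLast?_cons_cons] at hlast
        obtain ⟨e, he, hPe, hQe⟩ := exists_mem_arcsOf_of_head_of_getLast hPQ (cons_ne_nil c l)
          ((hPQ b).resolve_right hb) hlast
        exact ⟨e, mem_cons_of_mem _ he, hPe, hQe⟩

end Arcs

section Digraph

variable {V : Type*} {A : Finset (V × V)}

def IsWalk (A : Finset (V × V)) (l : List V) (a b : V) : Prop :=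
  IsChain (ArcAdj A) l ∧ l.head? = some a ∧ l.getLast? = some b

theorem IsWalk.ne_nil {l : List V} {a b : V} (h : IsWalk A l a b) : l ≠ [] := by
  rintro rfl
  simp [IsWalk] at h

theorem IsWalk.append {l₁ l₂ : List V} {a b c d : V} (h₁ : IsWalk A l₁ a b) (hbc : (b, c) ∈ A)
    (h₂ : IsWalk A l₂ c d) : IsWalk A (l₁ ++ l₂) a d := by
  obtain ⟨hc₁, ha, hb⟩ := h₁
  obtain ⟨hc₂, hc, hd⟩ := h₂
  refine ⟨hc₁.append hc₂ ?_, by simp [head?_append, ha], by simp [getLast?_append, hd]⟩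
  simp only [hb, hc, Option.mem_def, Option.some.injEq]
  rintro _ rfl _ rfl
  exact hbc

theorem Relation.ReflTransGen.exists_isWalk {a b : V} (h : ReflTransGen (ArcAdj A) a b) :
    ∃ l, IsWalk A l a b := by
  obtain ⟨l, hl, hlast⟩ := exists_isChain_cons_of_relationReflTransGen h
  exact ⟨a :: l, hl, rfl, by rw [getLast?_eq_some_getLast (cons_ne_nil a l), hlast]⟩

theorem IsDAG.nodup {l : List V} (hdag : IsDAG A) (hl : IsChain (ArcAdj A) l) : l.Nodup :=
  haveI : Std.Irrefl (TransGen (ArcAdj A)) := ⟨hdag⟩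
  (hl.imp fun _ _ => TransGen.single).pairwise.nodup

theorem IsDAG.wellFounded [Finite V] (hdag : IsDAG A) : WellFounded (ArcAdj A) :=
  haveI : Std.Irrefl (TransGen (ArcAdj A)) := ⟨hdag⟩
  (Finite.wellFounded_of_trans_of_irrefl _).mono fun _ _ => TransGen.single

theorem IsDAG.wellFounded_swap [Finite V] (hdag : IsDAG A) :
    WellFounded (Function.swap (ArcAdj A)) :=
  haveI : Std.Irrefl (TransGen (Function.swap (ArcAdj A))) :=
    ⟨fun v h => hdag v (transGen_swap.1 h)⟩
  (Finite.wellFounded_of_trans_of_irrefl _).mono fun _ _ => TransGen.single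

variable [DecidableEq V]

theorem isSource_iff {v : V} : IsSource A v ↔ ∀ u, (u, v) ∉ A := by
  simp only [IsSource, inDeg, Finset.card_eq_zero, Finset.filter_eq_empty_iff, Prod.forall]
  exact ⟨fun h u hu => h u v hu rfl, by rintro h u _ hu rfl; exact h u hu⟩

theorem isSink_iff {v : V} : IsSink A v ↔ ∀ w, (v, w) ∉ A := by
  simp only [IsSink, outDeg, Finset.card_eq_zero, Finset.filter_eq_empty_iff, Prod.forall]
  exact ⟨fun h w hw => h v w hw rfl, by rintro h _ w hw rfl; exact h w hw⟩

theorem inDeg_le_one_iff {v : V} : inDeg A v ≤ 1 ↔ ∀ u w, (u, v) ∈ A → (w, v) ∈ A → u = w := by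
  simp only [inDeg, Finset.card_le_one, Finset.mem_filter, Prod.forall, Prod.mk.injEq]
  refine ⟨fun h u w hu hw => (h u v ⟨hu, rfl⟩ w v ⟨hw, rfl⟩).1, ?_⟩
  rintro h u _ ⟨hu, rfl⟩ w _ ⟨hw, rfl⟩
  exact ⟨h u w hu hw, rfl⟩

theorem outDeg_le_one_iff {v : V} : outDeg A v ≤ 1 ↔ ∀ u w, (v, u) ∈ A → (v, w) ∈ A → u = w := by
  simp only [outDeg, Finset.card_le_one, Finset.mem_filter, Prod.forall, Prod.mk.injEq]
  refine ⟨fun h u w hu hw => (h v u ⟨hu, rfl⟩ v w ⟨hw, rfl⟩).2, ?_⟩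
  rintro h _ u ⟨hu, rfl⟩ _ w ⟨hw, rfl⟩
  exact ⟨rfl, h u w hu hw⟩

theorem IsDAG.exists_isSource_isWalk [Finite V] (hdag : IsDAG A) (v : V) :
    ∃ s, IsSource A s ∧ ∃ l, IsWalk A l s v := by
  obtain ⟨s, hsv, hmin⟩ :=
    hdag.wellFounded.has_min {s | ReflTransGen (ArcAdj A) s v} ⟨v, .refl⟩
  exact ⟨s, isSource_iff.2 fun u hu => hmin u (.head hu hsv) hu, hsv.exists_isWalk⟩

theorem IsDAG.exists_isSink_isWalk [Finite V] (hdag : IsDAG A) (v : V) :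
    ∃ t, IsSink A t ∧ ∃ l, IsWalk A l v t := by
  obtain ⟨t, hvt, hmax⟩ :=
    hdag.wellFounded_swap.has_min {t | ReflTransGen (ArcAdj A) v t} ⟨v, .refl⟩
  exact ⟨t, isSink_iff.2 fun w hw => hmax w (.tail hvt hw) hw, hvt.exists_isWalk⟩

theorem isSourceSinkPath_append (hdag : IsDAG A) {l₁ l₂ : List V} {s b c t : V}
    (hs : IsSource A s) (h₁ : IsWalk A l₁ s b) (hbc : (b, c) ∈ A) (h₂ : IsWalk A l₂ c t)
    (ht : IsSink A t) : IsSourceSinkPath A (l₁ ++ l₂) := by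
  obtain ⟨hc, hhead, hlast⟩ := h₁.append hbc h₂
  refine ⟨?_, hc, hdag.nodup hc, ⟨s, hhead, hs⟩, ⟨t, hlast, ht⟩⟩
  have := length_pos_iff.2 h₁.ne_nil
  have := length_pos_iff.2 h₂.ne_nil
  rw [length_append]
  omega

theorem IsSourceSinkPath.of_append {l₁ l₂ : List V} (h : IsSourceSinkPath A (l₁ ++ l₂)) :
    IsChain (ArcAdj A) l₁ ∧ IsChain (ArcAdj A) l₂ ∧ (∀ s ∈ l₁.head?, IsSource A s) ∧
      ∀ t ∈ l₂.getLast?, IsSink A t := by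
  obtain ⟨-, hc, -, ⟨s, hs, hsrc⟩, ⟨t, ht, hsink⟩⟩ := h
  obtain ⟨hc₁, hc₂, -⟩ := List.isChain_append.1 hc
  refine ⟨hc₁, hc₂, fun x hx => ?_, fun x hx => ?_⟩
  · rw [head?_append, Option.mem_def.1 hx, Option.some_or] at hs
    exact Option.some_inj.1 hs ▸ hsrc
  · rw [getLast?_append, Option.mem_def.1 hx, Option.some_or] at ht
    exact Option.some_inj.1 ht ▸ hsink

end Digraph

section Labeling

variable {V : Type*} [DecidableEq V] {A : Finset (V × V)} {L : V → Label}

theorem FunnelLabeling.merge_of_mem (hL : FunnelLabeling A L) {a b : V} (hab : (a, b) ∈ A)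
    (ha : L a = .merge) : L b = .merge := by
  cases hb : L b
  · exact (hL.2.2 a b hab ⟨ha, hb⟩).elim
  · rfl

theorem FunnelLabeling.fork_of_mem (hL : FunnelLabeling A L) {a b : V} (hab : (a, b) ∈ A)
    (hb : L b = .fork) : L a = .fork := by
  cases ha : L a
  · rfl
  · exact (hL.2.2 a b hab ⟨ha, hb⟩).elim

theorem FunnelLabeling.eq_of_isChain_cons (hL : FunnelLabeling A L) {b : V} {l₁ l₂ : List V}
    (hb : L b = .merge ∨ IsSink A b) (h₁ : IsChain (ArcAdj A) (b :: l₁))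
    (h₂ : IsChain (ArcAdj A) (b :: l₂)) (ht₁ : ∀ t ∈ (b :: l₁).getLast?, IsSink A t)
    (ht₂ : ∀ t ∈ (b :: l₂).getLast?, IsSink A t) : l₁ = l₂ :=
  eq_of_isChain_cons_of_unique_succ (M := fun v => L v = .merge ∨ IsSink A v)
    (fun a u w ha hu hw => ha.elim (fun ha => outDeg_le_one_iff.1 (hL.2.1 a ha) u w hu hw)
      fun ha => (isSink_iff.1 ha u hu).elim)
    (fun _ u ha hu => ha.imp (hL.merge_of_mem hu) fun ha => (isSink_iff.1 ha u hu).elim)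
    hb h₁ h₂ (fun t ht => isSink_iff.1 (ht₁ t ht)) (fun t ht => isSink_iff.1 (ht₂ t ht))

theorem FunnelLabeling.eq_of_isChain_concat (hL : FunnelLabeling A L) {a : V} {l₁ l₂ : List V}
    (ha : L a = .fork ∨ IsSource A a) (h₁ : IsChain (ArcAdj A) (l₁ ++ [a]))
    (h₂ : IsChain (ArcAdj A) (l₂ ++ [a])) (hs₁ : ∀ s ∈ (l₁ ++ [a]).head?, IsSource A s)
    (hs₂ : ∀ s ∈ (l₂ ++ [a]).head?, IsSource A s) : l₁ = l₂ :=
  eq_of_isChain_concat_of_unique_pred (M := fun v => L v = .fork ∨ IsSource A v)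
    (fun b u w hb hu hw => hb.elim (fun hb => inDeg_le_one_iff.1 (hL.1 b hb) u w hu hw)
      fun hb => (isSource_iff.1 hb u hu).elim)
    (fun _ u hb hu => hb.imp (hL.fork_of_mem hu) fun hb => (isSource_iff.1 hb u hu).elim)
    ha h₁ h₂ (fun s hs => isSource_iff.1 (hs₁ s hs)) (fun s hs => isSource_iff.1 (hs₂ s hs))

theorem FunnelLabeling.eq_of_mem_arcsOf (hL : FunnelLabeling A L) {a b : V}
    (ha : L a = .fork ∨ IsSource A a) (hb : L b = .merge ∨ IsSink A b) {p q : List V}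
    (hp : IsSourceSinkPath A p) (hq : IsSourceSinkPath A q) (hap : (a, b) ∈ arcsOf p)
    (haq : (a, b) ∈ arcsOf q) : p = q := by
  obtain ⟨l₁, l₂, rfl⟩ := mem_arcsOf_iff.1 hap
  obtain ⟨k₁, k₂, rfl⟩ := mem_arcsOf_iff.1 haq
  rw [← singleton_append, ← append_assoc] at hp hq
  obtain ⟨hp₁, hp₂, hs₁, ht₁⟩ := hp.of_append
  obtain ⟨hq₁, hq₂, hs₂, ht₂⟩ := hq.of_append
  rw [hL.eq_of_isChain_concat ha hp₁ hq₁ hs₁ hs₂, hL.eq_of_isChain_cons hb hp₂ hq₂ ht₁ ht₂]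

theorem FunnelLabeling.isFunnel (hL : FunnelLabeling A L) : IsFunnel A := by
  rintro (_ | ⟨s, l⟩) hp
  · exact absurd hp.1 (by simp)
  have ⟨hlen, _, _, ⟨s', hs', hsrc⟩, t, ht, hsink⟩ := hp
  obtain rfl : s' = s := Option.some_inj.1 hs'.symm
  obtain ⟨e, he, ha, hb⟩ := exists_mem_arcsOf_of_head_of_getLast
    (P := fun v => L v = .fork ∨ IsSource A v) (Q := fun v => L v = .merge ∨ IsSink A v)
    (fun v => by cases L v <;> simp) (by rintro rfl; simp at hlen) (Or.inr hsrc)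
    fun x hx => Or.inr (Option.some_inj.1 (ht.symm.trans hx) ▸ hsink)
  exact ⟨e, he, _, ⟨hp, he⟩, fun q hq => hL.eq_of_mem_arcsOf ha hb hq.1 hp hq.2 he⟩

end Labeling

section Funnel

variable {V : Type*} [DecidableEq V] {A : Finset (V × V)}

theorem IsFunnel.not_reflTransGen [Finite V] (hdag : IsDAG A) (hfun : IsFunnel A) {m f : V}
    (hm : 1 < inDeg A m) (hf : 1 < outDeg A f) : ¬ ReflTransGen (ArcAdj A) m f := by
  intro hmf
  obtain ⟨x₁, x₂, hx₁, hx₂, hx⟩ : ∃ x₁ x₂, (x₁, m) ∈ A ∧ (x₂, m) ∈ A ∧ x₁ ≠ x₂ := by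
    simpa [inDeg_le_one_iff] using not_le.2 hm
  obtain ⟨y₁, y₂, hy₁, hy₂, hy⟩ : ∃ y₁ y₂, (f, y₁) ∈ A ∧ (f, y₂) ∈ A ∧ y₁ ≠ y₂ := by
    simpa [outDeg_le_one_iff] using not_le.2 hf
  obtain ⟨w, hw⟩ := hmf.exists_isWalk
  obtain ⟨s₁, hs₁, P₁, hP₁⟩ := hdag.exists_isSource_isWalk x₁
  obtain ⟨s₂, hs₂, P₂, hP₂⟩ := hdag.exists_isSource_isWalk x₂
  obtain ⟨t₁, ht₁, S₁, hS₁⟩ := hdag.exists_isSink_isWalk y₁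
  obtain ⟨t₂, ht₂, S₂, hS₂⟩ := hdag.exists_isSink_isWalk y₂
  have path {s x y t : V} {P S : List V} (hs : IsSource A s) (hP : IsWalk A P s x)
      (hx : (x, m) ∈ A) (hy : (f, y) ∈ A) (hS : IsWalk A S y t) (ht : IsSink A t) :
      IsSourceSinkPath A (P ++ w ++ S) :=
    isSourceSinkPath_append hdag hs (hP.append hx hw) hy hS ht
  have hpath₁₁ := path hs₁ hP₁ hx₁ hy₁ hS₁ ht₁
  obtain ⟨e, he, p, -, huniq⟩ := hfun _ hpath₁₁
  have hp₁₁ := huniq _ ⟨hpath₁₁, he⟩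
  rcases mem_arcsOf_append_append hw.ne_nil he with he | he
  · have hp₁₂ := huniq _
      ⟨path hs₁ hP₁ hx₁ hy₂ hS₂ ht₂, (prefix_append _ _).isInfix.arcsOf_subset he⟩
    obtain rfl : S₁ = S₂ := append_cancel_left (hp₁₁.trans hp₁₂.symm)
    exact hy (Option.some_inj.1 (hS₁.2.1.symm.trans hS₂.2.1))
  · have hp₂₁ := huniq _ ⟨path hs₂ hP₂ hx₂ hy₁ hS₁ ht₁, by
      rw [append_assoc]; exact (suffix_append _ _).isInfix.arcsOf_subset he⟩
    obtain rfl : P₁ = P₂ := append_cancel_right (append_cancel_right (hp₁₁.trans hp₂₁.symm))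
    exact hx (Option.some_inj.1 (hP₁.2.2.symm.trans hP₂.2.2))

open Classical in
noncomputable def reachLabel (A : Finset (V × V)) (v : V) : Label :=
  if ∃ m, 1 < inDeg A m ∧ ReflTransGen (ArcAdj A) m v then .merge else .fork

theorem IsFunnel.funnelLabeling_reachLabel [Finite V] (hdag : IsDAG A) (hfun : IsFunnel A) :
    FunnelLabeling A (reachLabel A) := by
  refine ⟨fun v hv => ?_, fun v hv => ?_, fun v u hvu ⟨hv, hu⟩ => ?_⟩
  · simp only [reachLabel, ite_eq_right_iff, reduceCtorEq, imp_false, not_exists, not_and] at hv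
    exact not_lt.1 fun h => hv v h .refl
  · simp only [reachLabel, ite_eq_left_iff, reduceCtorEq, imp_false, not_not] at hv
    obtain ⟨m, hm, hmv⟩ := hv
    exact not_lt.1 fun h => hfun.not_reflTransGen hdag hm h hmv
  · simp only [reachLabel, ite_eq_left_iff, ite_eq_right_iff, reduceCtorEq, imp_false, not_not]
      at hv hu
    obtain ⟨m, hm, hmv⟩ := hv
    exact hu ⟨m, hm, hmv.tail hvu⟩

end Funnel

/-- A DAG is a funnel iff it admits a funnel labeling. -/
theorem funnel_iff_exists_funnelLabeling (A : Finset (V × V)) (hdag : IsDAG A) :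
    IsFunnel A ↔ ∃ L : V → Label, FunnelLabeling A L :=
  ⟨fun hfun => ⟨reachLabel A, hfun.funnelLabeling_reachLabel hdag⟩, fun ⟨_, hL⟩ => hL.isFunnel⟩
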